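/- arXiv:2305.14125 — 3 statements merged into one kernel-verified Lean document; each statement's English description precedes it below -/
import Mathlib

section
/- A finite dataset D is naively Nash rationalizable if and only if it satisfies N-SARP. -/
def maxSet {X : Type} (S : Set X) (pref : X → X → Prop) : Set X :=
  {x | x ∈ S ∧ ∀ y ∈ S, pref x y}

def WeakOrder {X : Type} (pref : X → X → Prop) : Prop :=
  (∀ a b, pref a b ∨ pref b a) ∧ Transitive pref

def sec1 {X₁ X₂ : Type} (B : Set (X₁ × X₂)) (a : X₁) : Set (X₁ × X₂) :=
  {y ∈ B | y.1 = a}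

def sec2 {X₁ X₂ : Type} (B : Set (X₁ × X₂)) (b : X₂) : Set (X₁ × X₂) :=
  {y ∈ B | y.2 = b}

def NSARP {K X₁ X₂ : Type} (x : K → X₁ × X₂) (B : K → Set (X₁ × X₂)) : Prop :=
  ¬ ∃ (L : ℕ) (k : Fin (L + 1) → K), ∀ l : Fin (L + 1),
      x (k l) ≠ x (k (l + 1)) ∧ x (k l) ∈ sec1 (B (k (l + 1))) (x (k (l + 1))).1

def NNSARP {K X₁ X₂ : Type} (x : K → X₁ × X₂) (B : K → Set (X₁ × X₂)) : Prop :=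
  ¬ ∃ (L : ℕ) (k : Fin (L + 1) → K), ∀ l : Fin (L + 1),
      x (k l) ≠ x (k (l + 1)) ∧ x (k l) ∈ sec2 (B (k (l + 1))) (x (k (l + 1))).2

def Cond1 {K X₁ X₂ : Type} (x : K → X₁ × X₂) (B : K → Set (X₁ × X₂)) : Prop :=
  ∀ S : Set K, S.Nonempty →
    ¬ (⋃ k ∈ S, sec1 (B k) (x k).1) ⊆ ⋃ k ∈ S, (B k \ sec1 (B k) (x k).1)

def Cond2 {K X₁ X₂ : Type} (x : K → X₁ × X₂) (B : K → Set (X₁ × X₂)) : Prop :=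
  ¬ ∃ (L : ℕ) (k : Fin (L + 1) → K), ∀ l : Fin (L + 1),
      x (k l) ≠ x (k (l + 1)) ∧ x (k l) ∈ sec1 (B (k (l + 1))) (x (k l)).1 ∧
      sec1 (B (k (l + 1))) (x (k l)).1 ⊆ sec1 (B (k l)) (x (k l)).1

def NaiveRat {K X₁ X₂ : Type} (x : K → X₁ × X₂) (B : K → Set (X₁ × X₂)) : Prop :=
  ∃ p1 p2 : X₁ × X₂ → X₁ × X₂ → Prop, WeakOrder p1 ∧ WeakOrder p2 ∧
    ∀ k, (∃ z, maxSet (B k) p1 = {z} ∧ z ∈ sec1 (B k) (x k).1) ∧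
      maxSet (sec1 (B k) (x k).1) p2 = {x k}

def NaiveNashRat {K X₁ X₂ : Type} (x : K → X₁ × X₂) (B : K → Set (X₁ × X₂)) : Prop :=
  ∃ p1 p2 : X₁ × X₂ → X₁ × X₂ → Prop, WeakOrder p1 ∧ WeakOrder p2 ∧
    ∀ k, x k ∈ maxSet (sec2 (B k) (x k).2) p1 ∧
      maxSet (sec1 (B k) (x k).1) p2 = {x k}

def StrictNaiveNashRat {K X₁ X₂ : Type} (x : K → X₁ × X₂) (B : K → Set (X₁ × X₂)) : Prop :=
  ∃ p1 p2 : X₁ × X₂ → X₁ × X₂ → Prop, WeakOrder p1 ∧ WeakOrder p2 ∧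
    ∀ k, maxSet (sec2 (B k) (x k).2) p1 = {x k} ∧
      maxSet (sec1 (B k) (x k).1) p2 = {x k}

def SophRat {K X₁ X₂ : Type} (x : K → X₁ × X₂) (B : K → Set (X₁ × X₂)) : Prop :=
  ∃ p1 p2 : X₁ × X₂ → X₁ × X₂ → Prop, WeakOrder p1 ∧ WeakOrder p2 ∧
    ∀ k, maxSet (⋃ a ∈ Prod.fst '' B k, maxSet (sec1 (B k) a) p2) p1 = {x k}

/-!
Call `y` revealed worse than `z` when `z = x^k` and `y ≠ z` lies in `B^k(x₁^k)`. N-SARP says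
exactly that this relation has no cycles. A weak order for player 2 under which every `x^k` is
the unique maximum of `B^k(x₁^k)` ranks `z` strictly above `y` whenever `y` is revealed worse
than `z`, so a cycle is impossible. Conversely, without cycles the reflexive-transitive closure
of the relation is a partial order; any linear extension of it (Szpilrajn) serves as player 2's
preference, while player 1 may be indifferent between all outcomes.
-/

open Relation

section Cycles

variable {α : Type*} {r : α → α → Prop}

theorem Relation.TransGen.exists_path {a b : α} (h : TransGen r a b) :
    ∃ (L : ℕ) (k : Fin (L + 1) → α), k 0 = a ∧
      (∀ l : Fin L, r (k l.castSucc) (k l.succ)) ∧ r (k (Fin.last L)) b := by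
  induction h with
  | single hab => exact ⟨0, fun _ => a, rfl, Fin.elim0, hab⟩
  | tail _ hbc ih =>
    obtain ⟨L, k, h0, hstep, hlast⟩ := ih
    refine ⟨L + 1, Fin.snoc k _, by simpa using h0, fun l => ?_, by simpa using hbc⟩
    induction l using Fin.lastCases with
    | last => simpa using hlast
    | cast i => simpa only [Fin.succ_castSucc, Fin.snoc_castSucc] using hstep i

theorem exists_cycle_iff_exists_transGen_self :
    (∃ (L : ℕ) (k : Fin (L + 1) → α), ∀ l, r (k l) (k (l + 1))) ↔ ∃ a, TransGen r a a := by
  constructor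
  · rintro ⟨L, k, hk⟩
    have hpath : ∀ l : Fin (L + 1), TransGen r (k 0) (k (l + 1)) := by
      intro l
      induction l using Fin.induction with
      | zero => exact .single (hk 0)
      | succ i ih => simpa [Fin.coeSucc_eq_succ] using ih.tail (hk (i.castSucc + 1))
    exact ⟨k 0, by simpa using hpath (Fin.last L)⟩
  · rintro ⟨a, ha⟩
    obtain ⟨L, k, h0, hstep, hlast⟩ := ha.exists_path
    refine ⟨L, k, fun l => ?_⟩
    induction l using Fin.lastCases with
    | last => simpa [h0] using hlast
    | cast i => simpa [Fin.coeSucc_eq_succ] using hstep i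

theorem Relation.isPartialOrder_reflTransGen (h : ∀ a, ¬ TransGen r a a) :
    IsPartialOrder α (ReflTransGen r) where
  refl _ := .refl
  trans _ _ _ := ReflTransGen.trans
  antisymm a _ hab hba := by
    rcases reflTransGen_iff_eq_or_transGen.1 hab with rfl | hab
    · rfl
    · exact (h a (hab.trans_left hba)).elim

end Cycles

section Rationalizability

variable {K X₁ X₂ : Type} (x : K → X₁ × X₂) (B : K → Set (X₁ × X₂))

def RevealedWorse (y z : X₁ × X₂) : Prop :=
  ∃ k, x k = z ∧ y ≠ z ∧ y ∈ sec1 (B k) z.1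

theorem nsarp_iff_not_exists_revealedWorse_cycle :
    NSARP x B ↔
      ¬ ∃ (L : ℕ) (a : Fin (L + 1) → X₁ × X₂), ∀ l, RevealedWorse x B (a l) (a (l + 1)) := by
  refine not_congr ⟨fun ⟨L, k, hk⟩ => ⟨L, x ∘ k, fun l => ⟨k (l + 1), rfl, hk l⟩⟩, ?_⟩
  rintro ⟨L, a, ha⟩
  choose k hk using ha
  -- `k l` is observed at `a (l + 1)`, so the observation at `a l` is `k (l - 1)`.
  have hxk : ∀ l, x (k (l - 1)) = a l := fun l => by simpa using (hk (l - 1)).1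
  exact ⟨L, fun l => k (l - 1), fun l => by simpa [hxk, (hk l).1] using (hk l).2⟩

theorem nsarp_iff_forall_not_transGen_self :
    NSARP x B ↔ ∀ a, ¬ TransGen (RevealedWorse x B) a a := by
  rw [nsarp_iff_not_exists_revealedWorse_cycle, exists_cycle_iff_exists_transGen_self, not_exists]

variable {x B}

theorem RevealedWorse.strictly_below {p : X₁ × X₂ → X₁ × X₂ → Prop}
    (hp : ∀ ⦃a b c⦄, p a b → p b c → p a c)
    (hmax : ∀ k, maxSet (sec1 (B k) (x k).1) p = {x k}) {y z : X₁ × X₂}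
    (h : RevealedWorse x B y z) : p z y ∧ ¬ p y z := by
  obtain ⟨k, rfl, hne, hy⟩ := h
  have hk : x k ∈ maxSet (sec1 (B k) (x k).1) p := by rw [hmax k]; rfl
  refine ⟨hk.2 y hy, fun hyk => hne ?_⟩
  have hy_max : y ∈ maxSet (sec1 (B k) (x k).1) p := ⟨hy, fun w hw => hp hyk (hk.2 w hw)⟩
  rwa [hmax k] at hy_max

theorem NaiveNashRat.nsarp (h : NaiveNashRat x B) : NSARP x B := by
  obtain ⟨_, p, _, ⟨-, hp⟩, hmax⟩ := h
  let below : X₁ × X₂ → X₁ × X₂ → Prop := fun y z => p z y ∧ ¬ p y z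
  have : IsTrans _ below :=
    ⟨fun _ _ _ hab hbc => ⟨hp hbc.1 hab.1, fun hca => hbc.2 (hp hab.1 hca)⟩⟩
  rw [nsarp_iff_forall_not_transGen_self]
  intro a ha
  have haa : TransGen below a a :=
    TransGen.mono (fun _ _ hyz => hyz.strictly_below hp fun k => (hmax k).2) a a ha
  rw [transGen_eq_self] at haa
  exact haa.2 haa.1

theorem naiveNashRat_of_nsarp (hmem : ∀ k, x k ∈ B k) (h : NSARP x B) : NaiveNashRat x B := by
  rw [nsarp_iff_forall_not_transGen_self] at h
  have := isPartialOrder_reflTransGen h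
  obtain ⟨s, hs, hle⟩ := extend_partialOrder (ReflTransGen (RevealedWorse x B))
  refine ⟨fun _ _ => True, fun a b => s b a, ⟨fun _ _ => .inl trivial, fun _ _ _ _ _ => trivial⟩,
    ⟨fun a b => total_of s b a, fun _ _ _ hab hbc => _root_.trans hbc hab⟩,
    fun k => ⟨⟨⟨hmem k, rfl⟩, fun _ _ => trivial⟩, ?_⟩⟩
  have hupper : ∀ y ∈ sec1 (B k) (x k).1, s y (x k) := by
    intro y hy
    by_cases hyk : y = x k
    · exact hyk ▸ refl_of s y
    · exact hle _ _ (.single ⟨k, rfl, hyk, hy⟩)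
  ext y
  constructor
  · rintro ⟨hy, hy_max⟩
    exact antisymm (hupper y hy) (hy_max _ ⟨hmem k, rfl⟩)
  · rintro rfl
    exact ⟨⟨hmem k, rfl⟩, hupper⟩

end Rationalizability

theorem naive_nash_rationalizable_iff_NSARP_general
    {K X₁ X₂ : Type}
    (x : K → X₁ × X₂) (B : K → Set (X₁ × X₂)) (hmem : ∀ k, x k ∈ B k) :
    NaiveNashRat x B ↔ NSARP x B :=
  ⟨NaiveNashRat.nsarp, naiveNashRat_of_nsarp hmem⟩

theorem naive_nash_rationalizable_iff_NSARP
    {K X₁ X₂ : Type} [Fintype K]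
    (x : K → X₁ × X₂) (B : K → Set (X₁ × X₂)) (hmem : ∀ k, x k ∈ B k) :
    NaiveNashRat x B ↔ NSARP x B :=
  naive_nash_rationalizable_iff_NSARP_general x B hmem
end

section
/- Let D be a finite dataset with pairwise distinct first-period choices. Then D is naively rationalizable if and only if it satisfies Condition 1, since N-SARP is vacuously satisfied when all x₁^k are distinct. -/
/-! Necessity: if `p` is a weak order whose unique maximum on each `B k` lies in `A k`, take the
`k ∈ S` whose maximum `z k` is `p`-best among those of `S`. Were `z k ∈ B j \ A j` for some
`j ∈ S`, then `z k` would also be a maximum of `B j`, hence equal to `z j ∈ A j`.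

Sufficiency: the condition for `S` yields a point `y ∈ A k`, `k ∈ S`, that lies in `A j` for
every `j ∈ S` with `y ∈ B j`. Rank `y` first and rank the remaining alternatives as for the
smaller family `{j ∈ S | y ∉ B j}`, obtained by induction.

With distinct first-period choices each section `sec1 (B k) (x k).1` contains a single observed
choice, so ranking observed choices above all others handles the second period. -/

section WeakOrder

variable {α : Type} {p : α → α → Prop}

theorem WeakOrder.refl (hp : WeakOrder p) (a : α) : p a a :=
  (hp.1 a a).elim id id

theorem WeakOrder.exists_max_image {ι : Type*} (hp : WeakOrder p) (f : ι → α) {s : Finset ι}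
    (hs : s.Nonempty) : ∃ i ∈ s, ∀ j ∈ s, p (f i) (f j) := by
  induction hs using Finset.Nonempty.cons_induction with
  | singleton a => exact ⟨a, by simp, by simpa using hp.refl (f a)⟩
  | cons a s ha _ ih =>
    obtain ⟨i, hi, hmax⟩ := ih
    rcases hp.1 (f a) (f i) with hai | hia
    · exact ⟨a, by simp, by simpa using ⟨hp.refl _, fun j hj => hp.2 hai (hmax j hj)⟩⟩
    · exact ⟨i, by simp [hi], by simpa using ⟨hia, hmax⟩⟩

theorem WeakOrder.eq_of_maxSet_eq_singleton (hp : WeakOrder p) {B : Set α} {z w : α}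
    (hz : maxSet B p = {z}) (hw : w ∈ B) (hwz : p w z) : w = z := by
  have hzmax : z ∈ maxSet B p := hz ▸ rfl
  have hwmax : w ∈ maxSet B p := ⟨hw, fun y hy => hp.2 hwz (hzmax.2 y hy)⟩
  rwa [hz] at hwmax

end WeakOrder

theorem weakOrder_comap_le {α : Type} {β : Type*} [LinearOrder β] (r : α → β) :
    WeakOrder fun a b => r a ≤ r b :=
  ⟨fun _ _ => le_total _ _, fun _ _ _ => le_trans⟩

theorem maxSet_comap_le_eq_singleton {α : Type} {β : Type*} [LinearOrder β] {r : α → β} {B : Set α}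
    {z : α} (hz : z ∈ B) (hlt : ∀ w ∈ B, w ≠ z → r z < r w) :
    maxSet B (fun a b => r a ≤ r b) = {z} := by
  ext w
  refine ⟨fun ⟨hw, hwmax⟩ => ?_, ?_⟩
  · by_contra hne
    exact (hwmax z hz).not_gt (hlt w hw hne)
  · rintro rfl
    exact ⟨hz, fun y hy => (eq_or_ne y w).elim (fun h => h ▸ le_rfl) fun h => (hlt y hy h).le⟩

section UniqueMax

variable {K : Type*} {α : Type} {A B : K → Set α}

theorem not_biUnion_subset_biUnion_diff {p : α → α → Prop} (hp : WeakOrder p)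
    (hmax : ∀ k, ∃ z, maxSet (B k) p = {z} ∧ z ∈ A k) {S : Set K} (hSf : S.Finite)
    (hS : S.Nonempty) : ¬ (⋃ k ∈ S, A k) ⊆ ⋃ k ∈ S, (B k \ A k) := by
  choose z hz hzA using hmax
  obtain ⟨k, hk, hkbest⟩ := hp.exists_max_image z (hSf.toFinset_nonempty.mpr hS)
  rw [Set.Finite.mem_toFinset] at hk
  intro hsub
  obtain ⟨j, hj, hzkB, hzkA⟩ := Set.mem_iUnion₂.mp (hsub (Set.mem_biUnion hk (hzA k)))
  have hkj : z k = z j :=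
    hp.eq_of_maxSet_eq_singleton (hz j) hzkB (hkbest j (hSf.mem_toFinset.mpr hj))
  exact hzkA (hkj ▸ hzA j)

theorem exists_rank_of_not_biUnion_subset (hA : ∀ k, A k ⊆ B k)
    (hc : ∀ S : Set K, S.Nonempty → ¬ (⋃ k ∈ S, A k) ⊆ ⋃ k ∈ S, (B k \ A k)) (S : Finset K) :
    ∃ r : α → ℕ, ∀ k ∈ S, ∃ z ∈ A k, ∀ w ∈ B k, w ≠ z → r z < r w := by
  classical
  induction S using Finset.strongInduction with
  | H S ih =>
    rcases S.eq_empty_or_nonempty with rfl | hne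
    · exact ⟨0, by simp⟩
    obtain ⟨y, hyA, hyS⟩ := Set.not_subset.mp (hc S hne.to_set)
    obtain ⟨k, hk, hyk⟩ := Set.mem_iUnion₂.mp hyA
    have hyA_of_B : ∀ j ∈ S, y ∈ B j → y ∈ A j := fun j hj hyB => by
      by_contra hyAj
      exact hyS (Set.mem_biUnion (Finset.mem_coe.mpr hj) ⟨hyB, hyAj⟩)
    have hT : S.filter (y ∉ B ·) ⊂ S :=
      Finset.filter_ssubset.mpr ⟨k, hk, not_not.mpr (hA k hyk)⟩
    obtain ⟨r, hr⟩ := ih _ hT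
    refine ⟨fun w => if w = y then 0 else r w + 1, fun j hj => ?_⟩
    by_cases hyB : y ∈ B j
    · exact ⟨y, hyA_of_B j hj hyB, fun w _ hwy => by simp [hwy]⟩
    · obtain ⟨z, hzA, hzmin⟩ := hr j (Finset.mem_filter.mpr ⟨hj, hyB⟩)
      have hne_y : ∀ w ∈ B j, w ≠ y := fun w hw hwy => hyB (hwy ▸ hw)
      refine ⟨z, hzA, fun w hw hwz => ?_⟩
      simpa [hne_y w hw, hne_y z (hA j hzA)] using hzmin w hw hwz

theorem exists_weakOrder_maxSet_eq_singleton_iff [Fintype K] (hA : ∀ k, A k ⊆ B k) :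
    (∃ p : α → α → Prop, WeakOrder p ∧ ∀ k, ∃ z, maxSet (B k) p = {z} ∧ z ∈ A k) ↔
      ∀ S : Set K, S.Nonempty → ¬ (⋃ k ∈ S, A k) ⊆ ⋃ k ∈ S, (B k \ A k) := by
  refine ⟨fun ⟨p, hp, hmax⟩ S => not_biUnion_subset_biUnion_diff hp hmax S.toFinite, fun hc => ?_⟩
  obtain ⟨r, hr⟩ := exists_rank_of_not_biUnion_subset hA hc Finset.univ
  refine ⟨_, weakOrder_comap_le r, fun k => ?_⟩
  obtain ⟨z, hzA, hzmin⟩ := hr k (Finset.mem_univ k)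
  exact ⟨z, maxSet_comap_le_eq_singleton (hA k hzA) hzmin, hzA⟩

end UniqueMax

theorem exists_weakOrder_maxSet_sec1_eq_singleton {K X₁ X₂ : Type} {x : K → X₁ × X₂}
    {B : K → Set (X₁ × X₂)} (hmem : ∀ k, x k ∈ B k) (hinj : Function.Injective fun k => (x k).1) :
    ∃ p : X₁ × X₂ → X₁ × X₂ → Prop, WeakOrder p ∧ ∀ k, maxSet (sec1 (B k) (x k).1) p = {x k} := by
  refine ⟨fun a b => a ∈ Set.range x ∨ b ∉ Set.range x, ⟨fun a b => by tauto, fun a b c => by tauto⟩,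
    fun k => ?_⟩
  ext w
  refine ⟨fun ⟨hw, hwmax⟩ => ?_, ?_⟩
  · obtain ⟨s, rfl⟩ := (hwmax (x k) ⟨hmem k, rfl⟩).resolve_right (not_not.mpr ⟨k, rfl⟩)
    exact congrArg x (hinj hw.2)
  · rintro rfl
    exact ⟨⟨hmem k, rfl⟩, fun _ _ => Or.inl ⟨k, rfl⟩⟩

theorem naive_rationalizable_iff_Cond1_of_distinct
    {K X₁ X₂ : Type} [Fintype K]
    (x : K → X₁ × X₂) (B : K → Set (X₁ × X₂)) (hmem : ∀ k, x k ∈ B k)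
    (hdist : ∀ k s : K, k ≠ s → (x k).1 ≠ (x s).1) :
    NaiveRat x B ↔ Cond1 x B := by
  have hfirst := exists_weakOrder_maxSet_eq_singleton_iff
    (A := fun k => sec1 (B k) (x k).1) (B := B) fun k => Set.sep_subset _ _
  refine ⟨fun ⟨p1, _, hp1, _, h⟩ => hfirst.mp ⟨p1, hp1, fun k => (h k).1⟩, fun hc => ?_⟩
  obtain ⟨p1, hp1, h1⟩ := hfirst.mpr hc
  obtain ⟨p2, hp2, h2⟩ :=
    exists_weakOrder_maxSet_sec1_eq_singleton hmem fun k s hks => by_contra fun hne => hdist k s hne hks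
  exact ⟨p1, p2, hp1, hp2, fun k => ⟨h1 k, h2 k⟩⟩
end

section
/- Suppose weak orders ≿₁, ≿₂ rationalize a dataset in the sophisticated sense, and define the relation R₁ by x^k R₁ x^s iff x^k ≠ x^s and x^s ∈ B^k(x₁^s) ⊆ B^s(x₁^s). Then x^k R₁ x^s implies x^k ≻₁ x^s; in particular R₁ is acyclic. -/
/-!
Agent 2 best-responds within each first-coordinate section of a budget, and Agent 1 chooses among
these anticipated outcomes. If `x^k R₁ x^s`, then `x^s` is `≿₂`-maximal in its section of `B^s`,
hence also in the smaller section of `B^k` that still contains it, so `x^s` is an anticipated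
outcome under `B^k`; uniqueness of Agent 1's choice, together with `x^k ≠ x^s`, forces
`x^k ≻₁ x^s`. A cycle of `R₁` would then be a cycle of the transitive, irreflexive relation `≻₁`.
-/

/-- Agent 1's feasible set of anticipated outcomes under the budget `B`. -/
def anticipatedOutcomes {X₁ X₂ : Type} (B : Set (X₁ × X₂)) (p2 : X₁ × X₂ → X₁ × X₂ → Prop) :
    Set (X₁ × X₂) :=
  ⋃ a ∈ Prod.fst '' B, maxSet (sec1 B a) p2

lemma mem_maxSet_of_subset {X : Type} {S T : Set X} {p : X → X → Prop} {y : X}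
    (hST : S ⊆ T) (hyS : y ∈ S) (hyT : y ∈ maxSet T p) : y ∈ maxSet S p :=
  ⟨hyS, fun z hz => hyT.2 z (hST hz)⟩

lemma strict_of_maxSet_eq_singleton {X : Type} {S : Set X} {p : X → X → Prop} {y z : X}
    (htr : Transitive p) (hmax : maxSet S p = {z}) (hy : y ∈ S) (hne : z ≠ y) :
    p z y ∧ ¬ p y z := by
  have hz : z ∈ maxSet S p := hmax.ge rfl
  refine ⟨hz.2 y hy, fun hyz => hne ?_⟩
  have hymax : y ∈ maxSet S p := ⟨hy, fun w hw => htr hyz (hz.2 w hw)⟩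
  exact (hmax.le hymax).symm

lemma Transitive.strict {X : Type} {p : X → X → Prop} (htr : Transitive p) :
    Transitive fun a b => p a b ∧ ¬ p b a :=
  fun _ _ _ ⟨hab, _⟩ ⟨hbc, hcb⟩ => ⟨htr hab hbc, fun hca => hcb (htr hca hab)⟩

lemma Transitive.rel_self_of_cycle {α : Type} {r : α → α → Prop} (htr : Transitive r) {L : ℕ}
    {c : Fin (L + 1) → α} (hc : ∀ l, r (c l) (c (l + 1))) : r (c 0) (c 0) := by
  have hpath : ∀ i : Fin (L + 1), r (c 0) (c (i + 1)) := by
    refine Fin.induction (hc 0) fun i ih => ?_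
    rw [← Fin.coeSucc_eq_succ]
    exact htr ih (hc _)
  simpa using hpath (Fin.last L)

section Sophisticated

variable {X₁ X₂ : Type} {p1 p2 : X₁ × X₂ → X₁ × X₂ → Prop}

lemma mem_anticipatedOutcomes_iff {B : Set (X₁ × X₂)} {y : X₁ × X₂} :
    y ∈ anticipatedOutcomes B p2 ↔ y ∈ maxSet (sec1 B y.1) p2 := by
  simp only [anticipatedOutcomes, Set.mem_iUnion, Set.mem_image, exists_prop]
  constructor
  · rintro ⟨a, -, hy⟩
    rwa [show y.1 = a from hy.1.2]
  · exact fun hy => ⟨y.1, ⟨y, hy.1.1, rfl⟩, hy⟩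

lemma strict_pref_of_sec1_subset {Bk Bs : Set (X₁ × X₂)} {xk xs : X₁ × X₂}
    (htr : Transitive p1) (hk : maxSet (anticipatedOutcomes Bk p2) p1 = {xk})
    (hs : xs ∈ anticipatedOutcomes Bs p2) (hne : xk ≠ xs) (hmem : xs ∈ sec1 Bk xs.1)
    (hsub : sec1 Bk xs.1 ⊆ sec1 Bs xs.1) : p1 xk xs ∧ ¬ p1 xs xk := by
  have hsk : xs ∈ anticipatedOutcomes Bk p2 := mem_anticipatedOutcomes_iff.2 <|
    mem_maxSet_of_subset hsub hmem (mem_anticipatedOutcomes_iff.1 hs)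
  exact strict_of_maxSet_eq_singleton htr hk hsk hne

end Sophisticated

theorem R1_implies_strict_pref_and_acyclic_general
    {K X₁ X₂ : Type}
    (x : K → X₁ × X₂) (B : K → Set (X₁ × X₂))
    (p1 p2 : X₁ × X₂ → X₁ × X₂ → Prop)
    (hw1 : WeakOrder p1)
    (hrat : ∀ k, maxSet (⋃ a ∈ Prod.fst '' B k, maxSet (sec1 (B k) a) p2) p1 = {x k}) :
    let R1 : K → K → Prop := fun k s =>
      x k ≠ x s ∧ x s ∈ sec1 (B k) (x s).1 ∧ sec1 (B k) (x s).1 ⊆ sec1 (B s) (x s).1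
    (∀ k s, R1 k s → (p1 (x k) (x s) ∧ ¬ p1 (x s) (x k))) ∧
      ¬ ∃ (L : ℕ) (c : Fin (L + 1) → K), ∀ l : Fin (L + 1), R1 (c l) (c (l + 1)) := by
  intro R1
  have hstrict : ∀ k s, R1 k s → p1 (x k) (x s) ∧ ¬ p1 (x s) (x k) :=
    fun k s ⟨hne, hmem, hsub⟩ =>
      strict_pref_of_sec1_subset hw1.2 (hrat k) ((hrat s).ge rfl).1 hne hmem hsub
  refine ⟨hstrict, ?_⟩
  rintro ⟨L, c, hc⟩
  have hself := hw1.2.strict.rel_self_of_cycle (c := x ∘ c) fun l => hstrict _ _ (hc l)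
  exact hself.2 hself.1

theorem R1_implies_strict_pref_and_acyclic
    {K X₁ X₂ : Type} [Fintype K]
    (x : K → X₁ × X₂) (B : K → Set (X₁ × X₂)) (hmem : ∀ k, x k ∈ B k)
    (p1 p2 : X₁ × X₂ → X₁ × X₂ → Prop)
    (hw1 : WeakOrder p1) (hw2 : WeakOrder p2)
    (hrat : ∀ k, maxSet (⋃ a ∈ Prod.fst '' B k, maxSet (sec1 (B k) a) p2) p1 = {x k}) :
    let R1 : K → K → Prop := fun k s =>
      x k ≠ x s ∧ x s ∈ sec1 (B k) (x s).1 ∧ sec1 (B k) (x s).1 ⊆ sec1 (B s) (x s).1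
    (∀ k s, R1 k s → (p1 (x k) (x s) ∧ ¬ p1 (x s) (x k))) ∧
      ¬ ∃ (L : ℕ) (c : Fin (L + 1) → K), ∀ l : Fin (L + 1), R1 (c l) (c (l + 1)) :=
  R1_implies_strict_pref_and_acyclic_general x B p1 p2 hw1 hrat
end
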